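/- Euler gem formula: if a finite simple graph G is a q-sphere, then its Euler characteristic satisfies χ(G) = 1 + (−1)^q. -/

import Mathlib

universe u

/-- The unit sphere of a vertex: the subgraph induced on the neighbors of `v`. -/
def SimpleGraph.unitSphere {V : Type u} (G : SimpleGraph V) (v : V) :
    SimpleGraph {u : V // G.Adj v u} :=
  SimpleGraph.induce {u : V | G.Adj v u} G

/-- The graph obtained by deleting the vertex `v`. -/
def SimpleGraph.deleteVert {V : Type u} (G : SimpleGraph V) (v : V) :
    SimpleGraph {u : V // u ≠ v} :=
  SimpleGraph.induce {u : V | u ≠ v} G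

/-- Inductive notion of contractibility for graphs: the one-vertex graph is
contractible, and `G` is contractible if for some vertex `v` both the unit sphere
`S(v)` and the deletion `G ∖ v` are contractible. -/
inductive GraphContractible : ∀ {V : Type u}, SimpleGraph V → Prop
  | single {V : Type u} (G : SimpleGraph V) (h1 : Nonempty V) (h2 : Subsingleton V) :
      GraphContractible G
  | step {V : Type u} (G : SimpleGraph V) (v : V)
      (hS : GraphContractible (G.unitSphere v))
      (hD : GraphContractible (G.deleteVert v)) : GraphContractible G

/-- Inductive notion of a `q`-sphere: the empty graph is the `(-1)`-sphere, and for
`q ≥ 0` a graph is a `q`-sphere if every unit sphere is a `(q-1)`-sphere and deleting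
some vertex leaves a contractible graph. -/
inductive GraphSphere : ℤ → ∀ {V : Type u}, SimpleGraph V → Prop
  | empty {V : Type u} (G : SimpleGraph V) (h : IsEmpty V) : GraphSphere (-1) G
  | succ {V : Type u} (G : SimpleGraph V) (q : ℤ) (hq : 0 ≤ q)
      (hS : ∀ v : V, GraphSphere (q - 1) (G.unitSphere v))
      (hv : ∃ v : V, GraphContractible (G.deleteVert v)) : GraphSphere q G

/-- A graph is a `q`-manifold if every unit sphere is a `(q-1)`-sphere. -/
def IsGraphManifold (q : ℤ) {V : Type u} (G : SimpleGraph V) : Prop :=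
  ∀ v : V, GraphSphere (q - 1) (G.unitSphere v)

/-- The join of two graphs: keep all edges and connect every vertex of `G` to every
vertex of `H`. -/
def graphJoin {V W : Type u} (G : SimpleGraph V) (H : SimpleGraph W) :
    SimpleGraph (V ⊕ W) where
  Adj x y := match x, y with
    | Sum.inl a, Sum.inl b => G.Adj a b
    | Sum.inr a, Sum.inr b => H.Adj a b
    | Sum.inl _, Sum.inr _ => True
    | Sum.inr _, Sum.inl _ => True
  symm := by constructor; rintro (a | a) (b | b) h <;> simp_all [SimpleGraph.adj_comm]
  loopless := by constructor; rintro (a | a) h <;> exact SimpleGraph.irrefl _ h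

open Classical in
/-- `f_k(G)`: the number of cliques of `G` with exactly `k+1` vertices. -/
noncomputable def graphFVec {V : Type u} [Fintype V] (G : SimpleGraph V) (k : ℕ) : ℕ :=
  (Finset.univ.filter fun x : Finset V => x.card = k + 1 ∧ G.IsClique (↑x : Set V)).card

/-- The Euler characteristic `χ(G) = Σ_k (-1)^k f_k(G)`. -/
noncomputable def graphEulerChar {V : Type u} [Fintype V] (G : SimpleGraph V) : ℤ :=
  ∑ k ∈ Finset.range (Fintype.card V + 1), (-1 : ℤ) ^ k * graphFVec G k

open Classical in
/-- The curvature of a vertex: `K(v) = Σ_{x ∋ v} (-1)^(|x|-1)/|x|`, summing over the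
cliques of `G` containing `v`. -/
noncomputable def graphCurvature {V : Type u} [Fintype V] (G : SimpleGraph V) (v : V) : ℚ :=
  ∑ x ∈ Finset.univ.filter
      (fun x : Finset V => x.Nonempty ∧ G.IsClique (↑x : Set V) ∧ v ∈ x),
    (-1 : ℚ) ^ (x.card - 1) / (x.card : ℚ)

/-!
Sum `(-1)^|s|` over all cliques `s` of `G`, the empty one included; minus this sum is the
reduced Euler characteristic `χ(G) - 1`. Cliques avoiding a vertex `v` are the cliques of
`G ∖ v`, and cliques containing `v` are `v` joined to the cliques of `S(v)`, with the opposite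
sign, so the reduced Euler characteristic satisfies `χ̃(G) = χ̃(G ∖ v) - χ̃(S(v))`. Induction
along the definitions then gives `χ̃ = 0` for contractible graphs and `χ̃ = (-1)^q` for
`q`-spheres, starting from the empty graph, whose only clique is the empty one.
-/

open Finset

namespace SimpleGraph

variable {V : Type*} (G : SimpleGraph V)

open Classical in
noncomputable def reducedEulerChar [Fintype V] : ℤ :=
  -∑ s ∈ univ.filter (fun s : Finset V => G.IsClique (s : Set V)), (-1) ^ #s

theorem graphEulerChar_eq_reducedEulerChar_add_one [Fintype V] :
    graphEulerChar G = G.reducedEulerChar + 1 := by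
  classical
  set cliques := univ.filter (fun s : Finset V => G.IsClique (s : Set V))
  have hfiber : ∑ s ∈ cliques, (-1 : ℤ) ^ #s =
      ∑ k ∈ range (Fintype.card V + 1 + 1), (-1) ^ k * (#(cliques.filter (#· = k)) : ℤ) := by
    rw [← sum_fiberwise_of_maps_to (g := card) fun s _ => mem_range.2 (Nat.lt_succ_of_le
      (Nat.le_succ_of_le (card_le_univ s)))]
    refine sum_congr rfl fun k _ => ?_
    rw [sum_congr rfl fun s hs => by rw [(mem_filter.1 hs).2], sum_const, nsmul_eq_mul, mul_comm]
  have hempty : #(cliques.filter (#· = 0)) = 1 := by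
    rw [card_eq_one]
    exact ⟨∅, by ext s; simp +contextual [cliques]⟩
  have hsucc (k : ℕ) : #(cliques.filter (#· = k + 1)) = graphFVec G k := by
    rw [graphFVec]
    congr 1
    ext s
    simp [cliques, and_comm]
  rw [reducedEulerChar, hfiber, sum_range_succ', hempty, graphEulerChar]
  simp only [hsucc, pow_succ]
  simp [sum_neg_distrib]

theorem reducedEulerChar_of_isEmpty [Fintype V] [IsEmpty V] : G.reducedEulerChar = -1 := by
  rw [reducedEulerChar, univ_unique, Subsingleton.elim default ∅, filter_singleton,
    if_pos (by simp)]
  simp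

open Classical in
theorem reducedEulerChar_induce (s : Set V) [Fintype V] [Fintype s] :
    (G.induce s).reducedEulerChar =
      -∑ t ∈ univ.filter (fun t : Finset V => G.IsClique (t : Set V) ∧ ↑t ⊆ s), (-1) ^ #t := by
  rw [reducedEulerChar, neg_inj]
  refine sum_nbij' (fun t => t.map (Function.Embedding.subtype _))
    (fun t => t.subtype (· ∈ s)) (fun t ht => ?_) (fun t ht => ?_) (fun t _ => by ext; simp)
    (fun t ht => subtype_map_of_mem (mem_filter.1 ht).2.2) (fun t _ => by simp)
  · simp only [mem_filter, mem_univ, true_and] at ht ⊢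
    exact ⟨by simpa using isClique_induce_iff.mp ht, map_subtype_subset t⟩
  · simp only [mem_filter, mem_univ, true_and] at ht ⊢
    rw [isClique_induce_iff, ← Function.Embedding.coe_subtype, ← coe_map,
      subtype_map_of_mem ht.2]
    exact ht.1

open Classical in
theorem sum_isClique_mem_eq_neg_sum_isClique_subset_neighborSet [Fintype V] (v : V) :
    ∑ t ∈ univ.filter (fun t : Finset V => G.IsClique (t : Set V) ∧ v ∈ t), (-1 : ℤ) ^ #t =
      -∑ t ∈ univ.filter (fun t : Finset V => G.IsClique (t : Set V) ∧ ↑t ⊆ G.neighborSet v),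
          (-1) ^ #t := by
  rw [← sum_neg_distrib]
  refine sum_nbij' (fun t => t.erase v) (insert v) (fun t ht => ?_) (fun t ht => ?_)
    (fun t ht => insert_erase (mem_filter.1 ht).2.2)
    (fun t ht => erase_insert fun hv => G.loopless.irrefl v ((mem_filter.1 ht).2.2 hv))
    (fun t ht => ?_)
  · simp only [mem_filter, mem_univ, true_and, coe_erase, Set.sdiff_subset_iff,
      Set.singleton_union] at ht ⊢
    exact ⟨ht.1.subset Set.sdiff_subset, fun a ha =>
      or_iff_not_imp_left.2 fun hav => ht.1 (mem_coe.2 ht.2) ha (Ne.symm hav)⟩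
  · simp only [mem_filter, mem_univ, true_and, coe_insert, isClique_insert, mem_insert,
      true_or, and_true] at ht ⊢
    exact ⟨ht.1, fun b hb _ => ht.2 hb⟩
  · rw [← card_erase_add_one (mem_filter.1 ht).2.2, pow_succ]
    ring

theorem reducedEulerChar_eq_deleteVert_sub_unitSphere [Fintype V] (v : V)
    [Fintype {u // u ≠ v}] [Fintype {u // G.Adj v u}] :
    G.reducedEulerChar = (G.deleteVert v).reducedEulerChar - (G.unitSphere v).reducedEulerChar := by
  classical
  rw [deleteVert, unitSphere, reducedEulerChar_induce, reducedEulerChar_induce, reducedEulerChar,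
    ← sum_filter_add_sum_filter_not _ (fun t => v ∈ t), filter_filter, filter_filter,
    sum_isClique_mem_eq_neg_sum_isClique_subset_neighborSet]
  have hnot : univ.filter (fun t : Finset V => G.IsClique (t : Set V) ∧ v ∉ t) =
      univ.filter (fun t : Finset V => G.IsClique (t : Set V) ∧ ↑t ⊆ {u | u ≠ v}) := by
    ext t; simp [Set.subset_def]
  rw [hnot, neighborSet]
  ring

end SimpleGraph

open SimpleGraph

theorem GraphContractible.reducedEulerChar_eq_zero {V : Type*} {G : SimpleGraph V}
    (h : GraphContractible G) [Fintype V] : G.reducedEulerChar = 0 := by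
  revert ‹Fintype V›
  induction h with
  | single G hne _ =>
    intro _
    classical
    obtain ⟨v⟩ := hne
    have : IsEmpty {u // u ≠ v} := ⟨fun u => u.2 (Subsingleton.elim _ _)⟩
    have : IsEmpty {u // G.Adj v u} := ⟨fun u => G.ne_of_adj u.2 (Subsingleton.elim _ _)⟩
    rw [G.reducedEulerChar_eq_deleteVert_sub_unitSphere v, reducedEulerChar_of_isEmpty,
      reducedEulerChar_of_isEmpty, sub_self]
  | step G v _ _ ihS ihD =>
    intro _
    classical
    rw [G.reducedEulerChar_eq_deleteVert_sub_unitSphere v, ihS, ihD, sub_self]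

theorem GraphSphere.reducedEulerChar_eq {q : ℤ} {V : Type*} {G : SimpleGraph V}
    (h : GraphSphere q G) [Fintype V] : G.reducedEulerChar = -(-1) ^ (q + 1).toNat := by
  revert ‹Fintype V›
  induction h with
  | empty G _ => intro _; simp [reducedEulerChar_of_isEmpty]
  | succ G q hq _ hv ih =>
    intro _
    classical
    obtain ⟨v, hv⟩ := hv
    rw [G.reducedEulerChar_eq_deleteVert_sub_unitSphere v, hv.reducedEulerChar_eq_zero, ih,
      sub_add_cancel, show (q + 1).toNat = q.toNat + 1 by omega, pow_succ]
    ring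

/-- Euler gem formula: a `q`-sphere has Euler characteristic `1 + (-1)^q`. -/
theorem euler_gem {V : Type} [Fintype V] (G : SimpleGraph V) (q : ℕ)
    (hG : GraphSphere (q : ℤ) G) :
    graphEulerChar G = 1 + (-1 : ℤ) ^ q := by
  rw [graphEulerChar_eq_reducedEulerChar_add_one, hG.reducedEulerChar_eq,
    show ((q : ℤ) + 1).toNat = q + 1 by omega, pow_succ]
  ring
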